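/- Let w be a finite word over {0,1,2} and let i, j, k be such that {i,j,k} = {0,1,2}. Writing wi for the word w with the letter i appended, the weights satisfy: b_i^(wi) = 9 b_i^(w) / (13 b_i^(w) + b_j^(w) + b_k^(w)), b_j^(wi) = (2 b_i^(w) + 2 b_j^(w) - b_k^(w)) / (13 b_i^(w) + b_j^(w) + b_k^(w)), and b_k^(wi) = (2 b_i^(w) - b_j^(w) + 2 b_k^(w)) / (13 b_i^(w) + b_j^(w) + b_k^(w)); in particular the denominators 13 b_i^(w) + b_j^(w) + b_k^(w) = 1 + 12 b_i^(w) are nonzero. -/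

import Mathlib

open Matrix BigOperators

/-- The matrix `M_0`. -/
noncomputable def M0 : Matrix (Fin 3) (Fin 3) ℝ :=
  (1 / 15 : ℝ) • !![9, 0, 0; 2, 2, -1; 2, -1, 2]

/-- The matrix `M_1`. -/
noncomputable def M1 : Matrix (Fin 3) (Fin 3) ℝ :=
  (1 / 15 : ℝ) • !![2, 2, -1; 0, 9, 0; -1, 2, 2]

/-- The matrix `M_2`. -/
noncomputable def M2 : Matrix (Fin 3) (Fin 3) ℝ :=
  (1 / 15 : ℝ) • !![2, -1, 2; -1, 2, 2; 0, 0, 9]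

/-- `Mmat i` is the matrix `M_i`. -/
noncomputable def Mmat : Fin 3 → Matrix (Fin 3) (Fin 3) ℝ := ![M0, M1, M2]

/-- For a word `w = [w₁, ..., wₘ]`, `Mword w = M_{w₁} * ⋯ * M_{wₘ}`
(the empty word giving the identity matrix). -/
noncomputable def Mword (w : List (Fin 3)) : Matrix (Fin 3) (Fin 3) ℝ :=
  (w.map Mmat).prod

/-- The `j`-th column `z_j` of `M_w`, as a vector in `ℝ³`. -/
noncomputable def zcol (w : List (Fin 3)) (j : Fin 3) : Fin 3 → ℝ :=
  fun i => Mword w i j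

/-- The vector `z = z₀ + z₁ + z₂`, the sum of the columns of `M_w`. -/
noncomputable def zvec (w : List (Fin 3)) : Fin 3 → ℝ :=
  fun i => ∑ j : Fin 3, Mword w i j

/-- `c_j^(w)`, the `j`-th column sum of `M_w`, i.e. the `j`-th entry of `(1,1,1) M_w`. -/
noncomputable def cw (w : List (Fin 3)) (j : Fin 3) : ℝ :=
  ∑ i : Fin 3, Mword w i j

/-- `S^(w) = c₀^(w) + c₁^(w) + c₂^(w)`, the sum of all entries of `M_w`. -/
noncomputable def Sw (w : List (Fin 3)) : ℝ :=
  ∑ j : Fin 3, cw w j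

/-- The weight `b_j^(w) = 1/6 + c_j^(w) / (2 S^(w))`. -/
noncomputable def bwt (w : List (Fin 3)) (j : Fin 3) : ℝ :=
  1 / 6 + cw w j / (2 * Sw w)


/-!
The column sums evolve by `c^(wi) = c^(w) M_i`, and every `M_i` multiplies the quadratic form
`e₂(c) = c₀c₁ + c₁c₂ + c₂c₀` by exactly `1/25`. Hence `e₂(c^(w)) = 3 / 25^|w| > 0`, and since
`S² = c₀² + c₁² + c₂² + 2 e₂(c)`, the total `S^(w)` never vanishes. The denominator
`13 b_i + b_j + b_k` equals `15 S^(wi) / S^(w)`, so it is nonzero as well, and the recursions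
are identities of rational functions in `c^(w)`.
-/

lemma Mmat_apply (i a b : Fin 3) :
    Mmat i a b =
      (if a = i then (if b = i then 9 else 0)
        else if b = i then 2 else if a = b then 2 else -1) / 15 := by
  fin_cases i <;> fin_cases a <;> fin_cases b <;> norm_num [Mmat, M0, M1, M2]

lemma cw_eq_vecMul (w : List (Fin 3)) : cw w = (fun _ => 1) ᵥ* Mword w := by
  ext j
  simp [cw, vecMul, dotProduct]

lemma cw_append_singleton (w : List (Fin 3)) (i : Fin 3) :
    cw (w ++ [i]) = cw w ᵥ* Mmat i := by
  simp [cw_eq_vecMul, Mword, List.prod_append, vecMul_vecMul]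

def esymm2 (c : Fin 3 → ℝ) : ℝ := c 0 * c 1 + c 1 * c 2 + c 2 * c 0

lemma esymm2_vecMul_Mmat (c : Fin 3 → ℝ) (i : Fin 3) :
    esymm2 (c ᵥ* Mmat i) = esymm2 c / 25 := by
  fin_cases i <;>
  · simp [esymm2, vecMul, dotProduct, Fin.sum_univ_three, Mmat, M0, M1, M2]
    ring

lemma esymm2_cw (w : List (Fin 3)) : esymm2 (cw w) = 3 / 25 ^ w.length := by
  induction w using List.reverseRecOn with
  | nil => norm_num [esymm2, cw, Mword, Fin.sum_univ_three, one_apply]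
  | append_singleton w i ih =>
    rw [cw_append_singleton, esymm2_vecMul_Mmat, ih, List.length_append, List.length_singleton,
      pow_succ]
    ring

lemma Sw_ne_zero (w : List (Fin 3)) : Sw w ≠ 0 := by
  have hpos : 0 < esymm2 (cw w) := by rw [esymm2_cw]; positivity
  have hsq : Sw w ^ 2 = cw w 0 ^ 2 + cw w 1 ^ 2 + cw w 2 ^ 2 + 2 * esymm2 (cw w) := by
    simp only [Sw, Fin.sum_univ_three, esymm2]
    ring
  intro h0
  nlinarith [sq_nonneg (cw w 0), sq_nonneg (cw w 1), sq_nonneg (cw w 2)]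

lemma sum_bwt (w : List (Fin 3)) : ∑ j, bwt w j = 1 := by
  have hS0 : Sw w ≠ 0 := Sw_ne_zero w
  simp only [bwt, Finset.sum_add_distrib, ← Finset.sum_div, Finset.sum_const, Finset.card_univ,
    Fintype.card_fin]
  rw [← Sw]
  field_simp
  norm_num

section Permutation

variable {i j k : Fin 3}

lemma ne_of_insert_eq_univ (hijk : ({i, j, k} : Finset (Fin 3)) = Finset.univ) :
    i ≠ j ∧ i ≠ k ∧ j ≠ k := by
  revert i j k
  decide

lemma sum_eq_of_insert_eq_univ (hijk : ({i, j, k} : Finset (Fin 3)) = Finset.univ)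
    (f : Fin 3 → ℝ) : ∑ a, f a = f i + f j + f k := by
  obtain ⟨hij, hik, hjk⟩ := ne_of_insert_eq_univ hijk
  rw [← hijk, Finset.sum_insert (by simp [hij, hik]), Finset.sum_pair hjk, add_assoc]

lemma cw_append_singleton_of_insert_eq_univ
    (hijk : ({i, j, k} : Finset (Fin 3)) = Finset.univ) (w : List (Fin 3)) :
    cw (w ++ [i]) i = (9 * cw w i + 2 * cw w j + 2 * cw w k) / 15 ∧
    cw (w ++ [i]) j = (2 * cw w j - cw w k) / 15 ∧
    cw (w ++ [i]) k = (2 * cw w k - cw w j) / 15 := by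
  obtain ⟨hij, hik, hjk⟩ := ne_of_insert_eq_univ hijk
  simp only [cw_append_singleton, vecMul, dotProduct, sum_eq_of_insert_eq_univ hijk, Mmat_apply]
  simp only [hij, hik, hjk, hij.symm, hik.symm, hjk.symm, if_pos, if_false]
  refine ⟨?_, ?_, ?_⟩ <;> ring

end Permutation

/-- For a word `w` and `{i,j,k} = {0,1,2}`, writing `wi` for `w` with the letter `i`
appended, the weights satisfy the recursive formulas of Theorem 6.2; in particular
the denominator `13 b_i^(w) + b_j^(w) + b_k^(w) = 1 + 12 b_i^(w)` is nonzero. -/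
theorem stmt_12 (w : List (Fin 3)) (i j k : Fin 3)
    (hijk : ({i, j, k} : Finset (Fin 3)) = Finset.univ) :
    13 * bwt w i + bwt w j + bwt w k = 1 + 12 * bwt w i ∧
    13 * bwt w i + bwt w j + bwt w k ≠ 0 ∧
    bwt (w ++ [i]) i = 9 * bwt w i / (13 * bwt w i + bwt w j + bwt w k) ∧
    bwt (w ++ [i]) j =
      (2 * bwt w i + 2 * bwt w j - bwt w k) / (13 * bwt w i + bwt w j + bwt w k) ∧
    bwt (w ++ [i]) k =
      (2 * bwt w i - bwt w j + 2 * bwt w k) / (13 * bwt w i + bwt w j + bwt w k) := by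
  obtain ⟨hi, hj, hk⟩ := cw_append_singleton_of_insert_eq_univ hijk w
  have hS : Sw w = cw w i + cw w j + cw w k := sum_eq_of_insert_eq_univ hijk _
  have hS' : Sw (w ++ [i]) = (cw w i * 3 + cw w j + cw w k) / 5 := by
    rw [Sw, sum_eq_of_insert_eq_univ hijk, hi, hj, hk]
    ring
  have hS0 : cw w i + cw w j + cw w k ≠ 0 := hS ▸ Sw_ne_zero w
  have hS'0 : cw w i * 3 + cw w j + cw w k ≠ 0 := fun h =>
    Sw_ne_zero (w ++ [i]) (by rw [hS', h, zero_div])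
  have hden : 13 * bwt w i + bwt w j + bwt w k = 15 * Sw (w ++ [i]) / Sw w := by
    simp only [bwt, hS, hS']
    field_simp
    ring
  refine ⟨?_, ?_, ?_, ?_, ?_⟩
  · linarith [sum_eq_of_insert_eq_univ hijk (bwt w) ▸ sum_bwt w]
  · rw [hden]
    exact div_ne_zero (mul_ne_zero (by norm_num) (Sw_ne_zero _)) (Sw_ne_zero w)
  all_goals
    rw [hden]
    simp only [bwt, hi, hj, hk, hS, hS']
    field_simp
    ring
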